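/- For every k ≥ 1, every γ ∈ Γ^(k), every ♠ ∈ D^{(k,γ)} and every t ≥ 0, the nested oscillatory integral satisfies |ℑ^{(k,γ)}(t,♠)| ≤ t^{ℓ(γ)} / 𝔇(γ). -/

import Mathlib

open MeasureTheory intervalIntegral Filter Topology

noncomputable section

/-- Lattice of Fourier modes `ℤ^{ν1} × ℤ^{ν2}`. -/
abbrev ZLat (ν1 ν2 : ℕ) := (Fin ν1 → ℤ) × (Fin ν2 → ℤ)

/-- ℓ¹-norm of a lattice vector. -/
def l1 {ν : ℕ} (m : Fin ν → ℤ) : ℝ := ∑ j, |(m j : ℝ)|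

/-- Euclidean pairing of a lattice vector with a frequency vector. -/
def zdot {ν : ℕ} (m : Fin ν → ℤ) (ω : Fin ν → ℝ) : ℝ := ∑ j, (m j : ℝ) * ω j

/-- The linear phase `Φ^t(m,n) = exp(−i(⟨m,ω⟩² + ⟨n,ω'⟩²)t)`. -/
def Phi {ν1 ν2 : ℕ} (ω : Fin ν1 → ℝ) (ω' : Fin ν2 → ℝ) (t : ℝ) (p : ZLat ν1 ν2) : ℂ :=
  Complex.exp (-Complex.I * (((zdot p.1 ω) ^ 2 + (zdot p.2 ω') ^ 2 : ℝ) : ℂ) * (t : ℂ))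

/-- Triples of lattice points with prescribed alternating sum. -/
def TripleFiber (ν1 ν2 : ℕ) (p : ZLat ν1 ν2) : Type :=
  {v : ZLat ν1 ν2 × ZLat ν1 ν2 × ZLat ν1 ν2 // v.1 - v.2.1 + v.2.2 = p}

/-- The Picard iteration for the Fourier coefficients of the 2D cubic NLS. -/
def picard {ν1 ν2 : ℕ} (ω : Fin ν1 → ℝ) (ω' : Fin ν2 → ℝ) (c : ZLat ν1 ν2 → ℂ) (ε : ℝ) :
    ℕ → ℝ → ZLat ν1 ν2 → ℂ
  | 0 => fun t p => Phi ω ω' t p * c p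
  | (k + 1) => fun t p => Phi ω ω' t p * c p +
      Complex.I * (ε : ℂ) * ∫ s in (0:ℝ)..t, Phi ω ω' (t - s) p *
        ∑' v : TripleFiber ν1 ν2 p,
          picard ω ω' c ε k s v.val.1 * (starRingEnd ℂ) (picard ω ω' c ε k s v.val.2.1) *
            picard ω ω' c ε k s v.val.2.2

/-- The time scale `T_ε`. -/
def Teps (ν1 ν2 : ℕ) (κ1 κ2 ε : ℝ) : ℝ := (4 / 27) * (κ1 / 6) ^ ν1 * (κ2 / 6) ^ ν2 * |ε|⁻¹

/-- The constant `𝒜`. -/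
def Acal (ν1 ν2 : ℕ) (κ1 κ2 : ℝ) : ℝ := (3 / 2) * (6 / κ1) ^ ν1 * (6 / κ2) ^ ν2

/-- Abstract branches of the combinatorial tree. -/
inductive Branch where
  | zero : Branch
  | one : Branch
  | node : Branch → Branch → Branch → Branch
deriving DecidableEq

/-- The counting function ℓ. -/
def ell : Branch → ℕ
  | .zero => 0
  | .one => 1
  | .node a b c => ell a + ell b + ell c + 1

/-- The denominator function 𝔇. -/
def frakD : Branch → ℕ
  | .zero => 1
  | .one => 1
  | .node a b c => (ell a + ell b + ell c + 1) * (frakD a * frakD b * frakD c)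

/-- The finite branch sets `Γ^(k)`: `Γ^(1) = {0,1}`, `Γ^(k) = {0} ∪ (Γ^(k-1))³` for `k ≥ 2`. -/
def GammaSet : ℕ → Finset Branch
  | 0 => ∅
  | 1 => {Branch.zero, Branch.one}
  | (k + 2) => insert Branch.zero
      (((GammaSet (k + 1)) ×ˢ (GammaSet (k + 1)) ×ˢ (GammaSet (k + 1))).image
        fun x => Branch.node x.1 x.2.1 x.2.2)

/-- The domain `D^{(k,γ)}` attached to a branch. -/
def Dom (ν1 ν2 : ℕ) : Branch → Type
  | .zero => ZLat ν1 ν2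
  | .one => ZLat ν1 ν2 × ZLat ν1 ν2 × ZLat ν1 ν2
  | .node a b c => Dom ν1 ν2 a × Dom ν1 ν2 b × Dom ν1 ν2 c

/-- Flattening of an element of `D^{(k,γ)}` to the tuple `((𝔪_j,𝔫_j))_{1≤j≤2σ(γ)}`. -/
def flatten {ν1 ν2 : ℕ} : (γ : Branch) → Dom ν1 ν2 γ → List (ZLat ν1 ν2)
  | .zero, p => [p]
  | .one, s => [s.1, s.2.1, s.2.2]
  | .node a b c, s => flatten a s.1 ++ flatten b s.2.1 ++ flatten c s.2.2

/-- Alternating sum of a list: `a₁ − a₂ + a₃ − ⋯`. -/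
def altSum {ν1 ν2 : ℕ} : List (ZLat ν1 ν2) → ZLat ν1 ν2
  | [] => 0
  | (a :: l) => a - altSum l

/-- The summation function `λ`. -/
def lam {ν1 ν2 : ℕ} (γ : Branch) (s : Dom ν1 ν2 γ) : ZLat ν1 ν2 := altSum (flatten γ s)

/-- The coefficient factor `ℭ^{(k,γ)}`. -/
def frakC {ν1 ν2 : ℕ} (c : ZLat ν1 ν2 → ℂ) : (γ : Branch) → Dom ν1 ν2 γ → ℂ
  | .zero, p => c p
  | .one, s => c s.1 * (starRingEnd ℂ) (c s.2.1) * c s.2.2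
  | .node a b c', s =>
      frakC c a s.1 * (starRingEnd ℂ) (frakC c b s.2.1) * frakC c c' s.2.2

/-- The nested oscillatory integral factor `ℑ^{(k,γ)}`. -/
def frakI {ν1 ν2 : ℕ} (ω : Fin ν1 → ℝ) (ω' : Fin ν2 → ℝ) :
    (γ : Branch) → ℝ → Dom ν1 ν2 γ → ℂ
  | .zero, t, p => Phi ω ω' t (lam .zero p)
  | .one, t, s => ∫ x in (0:ℝ)..t, Phi ω ω' (t - x) (lam .one s) *
      (Phi ω ω' x s.1 * (starRingEnd ℂ) (Phi ω ω' x s.2.1) * Phi ω ω' x s.2.2)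
  | .node a b c, t, s => ∫ x in (0:ℝ)..t, Phi ω ω' (t - x) (lam (.node a b c) s) *
      (frakI ω ω' a x s.1 * (starRingEnd ℂ) (frakI ω ω' b x s.2.1) * frakI ω ω' c x s.2.2)

/-- The prefactor `𝔉^{(k,γ)}`. -/
def frakF {ν1 ν2 : ℕ} (ε : ℝ) : (γ : Branch) → Dom ν1 ν2 γ → ℂ
  | .zero, _ => 1
  | .one, _ => Complex.I * (ε : ℂ)
  | .node a b c, s => Complex.I * (ε : ℂ) *
      (frakF ε a s.1 * (starRingEnd ℂ) (frakF ε b s.2.1) * frakF ε c s.2.2)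

end

noncomputable section

lemma norm_Phi {ν1 ν2 : ℕ} (ω : Fin ν1 → ℝ) (ω' : Fin ν2 → ℝ) (t : ℝ) (p : ZLat ν1 ν2) :
    ‖Phi ω ω' t p‖ = 1 := by
  unfold Phi
  rw [Complex.norm_exp]
  simp [Complex.mul_re, Complex.mul_im, ← Complex.ofReal_pow]

lemma abs_Phi {ν1 ν2 : ℕ} (ω : Fin ν1 → ℝ) (ω' : Fin ν2 → ℝ) (t : ℝ) (p : ZLat ν1 ν2) :
    ‖Phi ω ω' t p‖ = 1 := norm_Phi ω ω' t p

lemma frakD_pos (γ : Branch) : 0 < frakD γ := by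
  induction γ with
  | zero => simp [frakD]
  | one => simp [frakD]
  | node a b c ha hb hc =>
    simp only [frakD]
    positivity

lemma frakI_bound_aux {ν1 ν2 : ℕ}
    (ω : Fin ν1 → ℝ) (ω' : Fin ν2 → ℝ) (γ : Branch)
    (s : Dom ν1 ν2 γ) (t : ℝ) (ht : 0 ≤ t) :
    ‖frakI ω ω' γ t s‖ ≤ t ^ ell γ / (frakD γ : ℝ) := by
  induction γ generalizing t with
  | zero => simp [frakI, norm_Phi, abs_Phi, ell, frakD]
  | one =>
    simp only [frakI, ell, frakD, Nat.cast_one, pow_one, div_one]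
    have := intervalIntegral.norm_integral_le_of_norm_le_const (C := 1)
      (f := fun x => Phi ω ω' (t - x) (lam .one s) *
        (Phi ω ω' x s.1 * (starRingEnd ℂ) (Phi ω ω' x s.2.1) * Phi ω ω' x s.2.2))
      (a := 0) (b := t) ?_
    · simpa [abs_of_nonneg ht] using this
    · intro x _
      simp [norm_Phi, abs_Phi]
  | node a b c ha hb hc =>
    set F : ℝ → ℂ := fun x => Phi ω ω' (t - x) (lam (.node a b c) s) *
      (frakI ω ω' a x s.1 * (starRingEnd ℂ) (frakI ω ω' b x s.2.1) * frakI ω ω' c x s.2.2)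
      with hF
    have hIeq : frakI ω ω' (.node a b c) t s = ∫ x in (0:ℝ)..t, F x := rfl
    set l : ℕ := ell a + ell b + ell c with hl
    set C : ℝ := ((frakD a : ℝ) * (frakD b : ℝ) * (frakD c : ℝ)) with hC
    have hCpos : 0 < C := by
      have := frakD_pos a; have := frakD_pos b; have := frakD_pos c
      positivity
    have hptwise : ∀ x ∈ Set.Icc (0:ℝ) t, ‖F x‖ ≤ x ^ l / C := by
      intro x hx
      have hx0 : 0 ≤ x := hx.1
      have h1 := ha s.1 x hx0
      have h2 := hb s.2.1 x hx0
      have h3 := hc s.2.2 x hx0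
      have hnF : ‖F x‖ = ‖frakI ω ω' a x s.1‖ * ‖frakI ω ω' b x s.2.1‖ *
          ‖frakI ω ω' c x s.2.2‖ := by
        simp [hF, norm_Phi, abs_Phi]
      rw [hnF]
      have hle : ‖frakI ω ω' a x s.1‖ * ‖frakI ω ω' b x s.2.1‖ * ‖frakI ω ω' c x s.2.2‖ ≤
          (x ^ ell a / (frakD a : ℝ)) * (x ^ ell b / (frakD b : ℝ)) *
          (x ^ ell c / (frakD c : ℝ)) := by
        gcongr <;> positivity
      refine hle.trans (le_of_eq ?_)
      rw [hl, hC]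
      rw [div_mul_div_comm, div_mul_div_comm, pow_add, pow_add]
    by_cases hInt : IntervalIntegrable F MeasureTheory.volume 0 t
    · have hbound_int : IntervalIntegrable (fun x => x ^ l / C) MeasureTheory.volume 0 t :=
        (Continuous.intervalIntegrable (by continuity) 0 t)
      have h1 : ‖∫ x in (0:ℝ)..t, F x‖ ≤ ∫ x in (0:ℝ)..t, ‖F x‖ :=
        intervalIntegral.norm_integral_le_integral_norm ht
      have h2 : (∫ x in (0:ℝ)..t, ‖F x‖) ≤ ∫ x in (0:ℝ)..t, x ^ l / C := by
        apply intervalIntegral.integral_mono_on ht hInt.norm hbound_int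
        intro x hx; exact hptwise x hx
      have h3 : (∫ x in (0:ℝ)..t, x ^ l / C) = t ^ (l + 1) / (((l : ℝ) + 1) * C) := by
        rw [intervalIntegral.integral_div, integral_pow]
        rw [zero_pow (Nat.succ_ne_zero l)]
        rw [sub_zero, div_div]
      rw [hIeq]
      refine (h1.trans (h2.trans h3.le)).trans (le_of_eq ?_)
      have hellnode : ell (.node a b c) = l + 1 := by simp [ell, hl]
      have hDnode : (frakD (.node a b c) : ℝ) = ((l : ℝ) + 1) * C := by
        simp only [frakD, hC, hl]
        push_cast
        ring
      rw [hellnode, hDnode]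
    · rw [hIeq, intervalIntegral.integral_undef hInt]
      simp only [norm_zero]
      positivity

/-- Bound on the nested oscillatory integral `ℑ^{(k,γ)}`. -/
theorem frakI_bound
    (ν1 ν2 : ℕ) (hν1 : 1 ≤ ν1) (hν2 : 1 ≤ ν2)
    (ω : Fin ν1 → ℝ) (ω' : Fin ν2 → ℝ)
    (k : ℕ) (hk : 1 ≤ k) (γ : Branch) (hγ : γ ∈ GammaSet k)
    (s : Dom ν1 ν2 γ) (t : ℝ) (ht : 0 ≤ t) :
    ‖frakI ω ω' γ t s‖ ≤ t ^ ell γ / (frakD γ : ℝ) :=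
  frakI_bound_aux ω ω' γ s t ht

end
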